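/- For any typewriter M in type D structures over A₂ and any DA bimodule P over (A₁, A₂), the box tensor product P ⊠ M := (P ⊠ M₀, P ⊠ M₁; I ⊠ D_f, I ⊠ D_h; I ⊠ D_CR) is a typewriter in type D structures over A₁; moreover P ⊠ (·) is functorial: it sends morphisms of typewriters to morphisms, homotopies to homotopies, and hence homotopy equivalences of typewriters to homotopy equivalences. -/

import Mathlib

set_option maxHeartbeats 1000000

/-!
STATEMENT 16: For any typewriter M in type D structures over A₂ and any DA
bimodule P over (A₁, A₂), the box tensor product
P ⊠ M = (P ⊠ M₀, P ⊠ M₁; I ⊠ D_f, I ⊠ D_h; I ⊠ D_CR) is a typewriter in type D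
structures over A₁; moreover P ⊠ (·) is functorial: it sends morphisms of
typewriters to morphisms and homotopies to homotopies (hence homotopy
equivalences to homotopy equivalences).  (The DA bimodule P is modelled by its
actions δ¹₁ and δ¹₂, with the DA structure relations as hypotheses.)
-/

set_option maxHeartbeats 1000000 in
abbrev F2 := ZMod 2
open scoped TensorProduct
open LinearMap

section TypeD

variable {A : Type} [Ring A] [Algebra F2 A]
variable {M N P Q P' Q' : Type}
  [AddCommGroup M] [Module F2 M] [AddCommGroup N] [Module F2 N]
  [AddCommGroup P] [Module F2 P] [AddCommGroup Q] [Module F2 Q]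
  [AddCommGroup P'] [Module F2 P'] [AddCommGroup Q'] [Module F2 Q']

/-- Composition of coefficient-type maps: μ ∘ (id_A ⊗ ψ) ∘ φ. -/
noncomputable def comp2 (ψ : N →ₗ[F2] A ⊗[F2] P) (φ : M →ₗ[F2] A ⊗[F2] N) :
    M →ₗ[F2] A ⊗[F2] P :=
  (rTensor P (mul' F2 A)) ∘ₗ (TensorProduct.assoc F2 A A P).symm.toLinearMap ∘ₗ
    (lTensor A ψ) ∘ₗ φ

/-- The identity morphism of type D structures, x ↦ 1 ⊗ x. -/
noncomputable def idD (A : Type) [Ring A] [Algebra F2 A] (M : Type) [AddCommGroup M]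
    [Module F2 M] : M →ₗ[F2] A ⊗[F2] M :=
  TensorProduct.mk F2 A M 1

variable (dA : A →ₗ[F2] A)

/-- The type D structure relation over the dg algebra (A, dA). -/
noncomputable def IsTypeD (δ : M →ₗ[F2] A ⊗[F2] M) : Prop :=
  comp2 δ δ + rTensor M dA ∘ₗ δ = 0

/-- φ is a morphism of type D structures (M, δM) → (N, δN). -/
noncomputable def IsDMor (δM : M →ₗ[F2] A ⊗[F2] M) (δN : N →ₗ[F2] A ⊗[F2] N)
    (φ : M →ₗ[F2] A ⊗[F2] N) : Prop :=
  comp2 δN φ + comp2 φ δM + rTensor N dA ∘ₗ φ = 0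

/-- ν is a homotopy between the morphisms φ and φ' of type D structures. -/
noncomputable def IsDHtpy (δM : M →ₗ[F2] A ⊗[F2] M) (δN : N →ₗ[F2] A ⊗[F2] N)
    (φ φ' ν : M →ₗ[F2] A ⊗[F2] N) : Prop :=
  φ + φ' = comp2 δN ν + comp2 ν δM + rTensor N dA ∘ₗ ν

/- Structural ("hat") maps between direct sums. -/
noncomputable def hat0 (φ : P →ₗ[F2] A ⊗[F2] P') : P × Q →ₗ[F2] A ⊗[F2] (P' × Q') :=
  lTensor A (LinearMap.inl F2 P' Q') ∘ₗ φ ∘ₗ LinearMap.fst F2 P Q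
noncomputable def hat1 (φ : Q →ₗ[F2] A ⊗[F2] Q') : P × Q →ₗ[F2] A ⊗[F2] (P' × Q') :=
  lTensor A (LinearMap.inr F2 P' Q') ∘ₗ φ ∘ₗ LinearMap.snd F2 P Q
noncomputable def hatf (φ : P →ₗ[F2] A ⊗[F2] Q') : P × Q →ₗ[F2] A ⊗[F2] (P' × Q') :=
  lTensor A (LinearMap.inr F2 P' Q') ∘ₗ φ ∘ₗ LinearMap.fst F2 P Q
noncomputable def hatg (φ : Q →ₗ[F2] A ⊗[F2] P') : P × Q →ₗ[F2] A ⊗[F2] (P' × Q') :=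
  lTensor A (LinearMap.inl F2 P' Q') ∘ₗ φ ∘ₗ LinearMap.snd F2 P Q

/- Components of a map between direct sums. -/
noncomputable def cg (ψ : P × Q →ₗ[F2] A ⊗[F2] (P' × Q')) : Q →ₗ[F2] A ⊗[F2] P' :=
  lTensor A (LinearMap.fst F2 P' Q') ∘ₗ ψ ∘ₗ LinearMap.inr F2 P Q
noncomputable def cfg (ψ : P × Q →ₗ[F2] A ⊗[F2] (P' × Q')) : P →ₗ[F2] A ⊗[F2] P' :=
  lTensor A (LinearMap.fst F2 P' Q') ∘ₗ ψ ∘ₗ LinearMap.inl F2 P Q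
noncomputable def cgh (ψ : P × Q →ₗ[F2] A ⊗[F2] (P' × Q')) : Q →ₗ[F2] A ⊗[F2] Q' :=
  lTensor A (LinearMap.snd F2 P' Q') ∘ₗ ψ ∘ₗ LinearMap.inr F2 P Q
noncomputable def cfgh (ψ : P × Q →ₗ[F2] A ⊗[F2] (P' × Q')) : P →ₗ[F2] A ⊗[F2] Q' :=
  lTensor A (LinearMap.snd F2 P' Q') ∘ₗ ψ ∘ₗ LinearMap.inl F2 P Q

/-- The triangular map (x,y) ↦ (a x, b y + c x): gives both the structure map
of a mapping cone (for a, b the structure maps and c the glued morphism) and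
the induced ("bold") maps on mapping cones. -/
noncomputable def dbold (a : P →ₗ[F2] A ⊗[F2] P') (b : Q →ₗ[F2] A ⊗[F2] Q')
    (c : P →ₗ[F2] A ⊗[F2] Q') : P × Q →ₗ[F2] A ⊗[F2] (P' × Q') :=
  hat0 a + hat1 b + hatf c

end TypeD

/-- A typewriter in type D structures over the dg algebra (A, dA). -/
structure TWOb (A : Type) [Ring A] [Algebra F2 A] (dA : A →ₗ[F2] A) where
  C0 : Type
  C1 : Type
  [ig0 : AddCommGroup C0] [im0 : Module F2 C0]
  [ig1 : AddCommGroup C1] [im1 : Module F2 C1]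
  δ0 : C0 →ₗ[F2] A ⊗[F2] C0
  δ1 : C1 →ₗ[F2] A ⊗[F2] C1
  h0 : IsTypeD dA δ0
  h1 : IsTypeD dA δ1
  Df : C0 →ₗ[F2] A ⊗[F2] C1
  Dh : C0 →ₗ[F2] A ⊗[F2] C1
  hf : IsDMor dA δ0 δ1 Df
  hh : IsDMor dA δ0 δ1 Dh
  DCR : C0 × C1 →ₗ[F2] A ⊗[F2] (C0 × C1)
  hcr : IsDMor dA (dbold δ0 δ1 Df) (dbold δ0 δ1 Dh) DCR

attribute [instance] TWOb.ig0 TWOb.im0 TWOb.ig1 TWOb.im1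

section Hom

variable {A : Type} [Ring A] [Algebra F2 A] {dA : A →ₗ[F2] A}

/-- A morphism of typewriters in type D structures over (A, dA). -/
structure TWHom (X Y : TWOb A dA) where
  t0 : X.C0 →ₗ[F2] A ⊗[F2] Y.C0
  t1 : X.C1 →ₗ[F2] A ⊗[F2] Y.C1
  tf : X.C0 →ₗ[F2] A ⊗[F2] Y.C1
  th : X.C0 →ₗ[F2] A ⊗[F2] Y.C1
  tcr : X.C0 × X.C1 →ₗ[F2] A ⊗[F2] (Y.C0 × Y.C1)
  h0 : IsDMor dA X.δ0 Y.δ0 t0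
  h1 : IsDMor dA X.δ1 Y.δ1 t1
  hf : comp2 t1 X.Df + comp2 Y.Df t0
      = comp2 Y.δ1 tf + comp2 tf X.δ0 + rTensor Y.C1 dA ∘ₗ tf
  hh : comp2 t1 X.Dh + comp2 Y.Dh t0
      = comp2 Y.δ1 th + comp2 th X.δ0 + rTensor Y.C1 dA ∘ₗ th
  hcr : comp2 (dbold t0 t1 th) X.DCR + comp2 Y.DCR (dbold t0 t1 tf)
      = comp2 (dbold Y.δ0 Y.δ1 Y.Dh) tcr + comp2 tcr (dbold X.δ0 X.δ1 X.Df)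
        + rTensor (Y.C0 × Y.C1) dA ∘ₗ tcr

/-- The induced map 𝐓_f : Cone(D_f) → Cone(D'_f). -/
noncomputable def TWHom.boldf {X Y : TWOb A dA} (T : TWHom X Y) :
    X.C0 × X.C1 →ₗ[F2] A ⊗[F2] (Y.C0 × Y.C1) := dbold T.t0 T.t1 T.tf

/-- The induced map 𝐓_h : Cone(D_h) → Cone(D'_h). -/
noncomputable def TWHom.boldh {X Y : TWOb A dA} (T : TWHom X Y) :
    X.C0 × X.C1 →ₗ[F2] A ⊗[F2] (Y.C0 × Y.C1) := dbold T.t0 T.t1 T.th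

/-- The induced map 𝐓_CR : Cone(D_CR) → Cone(D'_CR). -/
noncomputable def TWHom.boldcr {X Y : TWOb A dA} (T : TWHom X Y) :
    (X.C0 × X.C1) × (X.C0 × X.C1) →ₗ[F2] A ⊗[F2] ((Y.C0 × Y.C1) × (Y.C0 × Y.C1)) :=
  dbold T.boldf T.boldh T.tcr

/-- The structure map of Cone(D_CR). -/
noncomputable def TWOb.coneCR (X : TWOb A dA) :
    (X.C0 × X.C1) × (X.C0 × X.C1) →ₗ[F2] A ⊗[F2] ((X.C0 × X.C1) × (X.C0 × X.C1)) :=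
  dbold (dbold X.δ0 X.δ1 X.Df) (dbold X.δ0 X.δ1 X.Dh) X.DCR

/-- A homotopy between morphisms S, T of typewriters. -/
structure TWHtpy {X Y : TWOb A dA} (S T : TWHom X Y) where
  k0 : X.C0 →ₗ[F2] A ⊗[F2] Y.C0
  k1 : X.C1 →ₗ[F2] A ⊗[F2] Y.C1
  kf : X.C0 →ₗ[F2] A ⊗[F2] Y.C1
  kh : X.C0 →ₗ[F2] A ⊗[F2] Y.C1
  kcr : X.C0 × X.C1 →ₗ[F2] A ⊗[F2] (Y.C0 × Y.C1)
  p0 : IsDHtpy dA X.δ0 Y.δ0 S.t0 T.t0 k0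
  p1 : IsDHtpy dA X.δ1 Y.δ1 S.t1 T.t1 k1
  pf : IsDHtpy dA (dbold X.δ0 X.δ1 X.Df) (dbold Y.δ0 Y.δ1 Y.Df)
      S.boldf T.boldf (dbold k0 k1 kf)
  ph : IsDHtpy dA (dbold X.δ0 X.δ1 X.Dh) (dbold Y.δ0 Y.δ1 Y.Dh)
      S.boldh T.boldh (dbold k0 k1 kh)
  pcr : IsDHtpy dA X.coneCR Y.coneCR S.boldcr T.boldcr
      (dbold (dbold k0 k1 kf) (dbold k0 k1 kh) kcr)

end Hom

section Box

variable {A1 A2 : Type} [Ring A1] [Algebra F2 A1] [Ring A2] [Algebra F2 A2]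
variable {Pc : Type} [AddCommGroup Pc] [Module F2 Pc]

/-- The box tensor product structure map on P ⊠ N. -/
noncomputable def boxδ (d11 : Pc →ₗ[F2] A1 ⊗[F2] Pc)
    (d12 : Pc ⊗[F2] A2 →ₗ[F2] A1 ⊗[F2] Pc)
    {N : Type} [AddCommGroup N] [Module F2 N] (δN : N →ₗ[F2] A2 ⊗[F2] N) :
    Pc ⊗[F2] N →ₗ[F2] A1 ⊗[F2] (Pc ⊗[F2] N) :=
  (TensorProduct.assoc F2 A1 Pc N).toLinearMap ∘ₗ rTensor N d11
    + (TensorProduct.assoc F2 A1 Pc N).toLinearMap ∘ₗ rTensor N d12 ∘ₗ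
      (TensorProduct.assoc F2 Pc A2 N).symm.toLinearMap ∘ₗ lTensor Pc δN

/-- The box tensor product I ⊠ φ of the identity of P with a morphism φ. -/
noncomputable def boxMor (d12 : Pc ⊗[F2] A2 →ₗ[F2] A1 ⊗[F2] Pc)
    {N N' : Type} [AddCommGroup N] [Module F2 N] [AddCommGroup N'] [Module F2 N']
    (φ : N →ₗ[F2] A2 ⊗[F2] N') :
    Pc ⊗[F2] N →ₗ[F2] A1 ⊗[F2] (Pc ⊗[F2] N') :=
  (TensorProduct.assoc F2 A1 Pc N').toLinearMap ∘ₗ rTensor N' d12 ∘ₗ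
    (TensorProduct.assoc F2 Pc A2 N').symm.toLinearMap ∘ₗ lTensor Pc φ

/-- I ⊠ ψ for a map between mapping cones, transported through the canonical
identification P ⊠ (N₀ ⊕ N₁) ≅ (P ⊠ N₀) ⊕ (P ⊠ N₁). -/
noncomputable def boxCone (d12 : Pc ⊗[F2] A2 →ₗ[F2] A1 ⊗[F2] Pc)
    {C0 C1 C0' C1' : Type} [AddCommGroup C0] [Module F2 C0] [AddCommGroup C1]
    [Module F2 C1] [AddCommGroup C0'] [Module F2 C0'] [AddCommGroup C1'] [Module F2 C1']
    (ψ : C0 × C1 →ₗ[F2] A2 ⊗[F2] (C0' × C1')) :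
    (Pc ⊗[F2] C0) × (Pc ⊗[F2] C1) →ₗ[F2]
      A1 ⊗[F2] ((Pc ⊗[F2] C0') × (Pc ⊗[F2] C1')) :=
  lTensor A1 (TensorProduct.prodRight F2 F2 Pc C0' C1').toLinearMap ∘ₗ
    boxMor d12 ψ ∘ₗ (TensorProduct.prodRight F2 F2 Pc C0 C1).symm.toLinearMap

end Box

/-!
Write `∂φ = δ_N ∘ φ + φ ∘ δ_M + dφ` for the differential on morphisms of type D structures.
The DA structure relations make `I ⊠ (·)` commute with composition and with `∂`: the relation
`δ¹₂(p, a b) = δ¹₂(δ¹₂(p, a), b)` gives `I ⊠ (ψ ∘ φ) = (I ⊠ ψ) ∘ (I ⊠ φ)`, and the relation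
pairing `δ¹₁`, `δ¹₂` with the differentials gives `∂(I ⊠ φ) = I ⊠ ∂φ`; together with
`(δ¹₁)² + dδ¹₁ = 0` this also makes `P ⊠ N` a type D structure. The remaining typewriter
conditions all read `∂ν = 0` or `∂ν = φ + φ'` with `φ`, `φ'` composites, so `I ⊠ (·)` carries
each of them for `M` to the same condition for `P ⊠ M`. Conditions on mapping cones are
transported along `P ⊠ (N₀ ⊕ N₁) ≅ (P ⊠ N₀) ⊕ (P ⊠ N₁)`, which turns `P ⊠` of a triangular
cone map into the triangular map of the boxed components.
-/

theorem ZModModule.eq_of_add_eq_zero {G : Type*} [AddCommGroup G] [Module (ZMod 2) G]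
    {x y : G} (h : x + y = 0) : x = y := by
  rwa [add_eq_zero_iff_eq_neg, ZModModule.neg_eq_self] at h

theorem LinearMap.rTensor_lTensor_comm_apply {R M N P Q : Type*} [CommSemiring R]
    [AddCommMonoid M] [Module R M] [AddCommMonoid N] [Module R N]
    [AddCommMonoid P] [Module R P] [AddCommMonoid Q] [Module R Q]
    (f : M →ₗ[R] P) (g : N →ₗ[R] Q) (x : M ⊗[R] N) :
    rTensor Q f (lTensor M g x) = lTensor P g (rTensor N f x) := by
  rw [← LinearMap.comp_apply (rTensor Q f), rTensor_comp_lTensor, ← lTensor_comp_rTensor,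
    LinearMap.comp_apply]

section ProdRight

variable {R M₁ M₂ M₃ : Type*} [CommSemiring R] [AddCommMonoid M₁] [Module R M₁]
  [AddCommMonoid M₂] [Module R M₂] [AddCommMonoid M₃] [Module R M₃]

theorem TensorProduct.prodRight_comp_lTensor_inl :
    (prodRight R R M₁ M₂ M₃).toLinearMap ∘ₗ lTensor M₁ (inl R M₂ M₃) = inl R _ _ :=
  TensorProduct.ext' fun _ _ => by simp

theorem TensorProduct.prodRight_comp_lTensor_inr :
    (prodRight R R M₁ M₂ M₃).toLinearMap ∘ₗ lTensor M₁ (inr R M₂ M₃) = inr R _ _ :=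
  TensorProduct.ext' fun _ _ => by simp

theorem TensorProduct.lTensor_fst_comp_prodRight_symm :
    lTensor M₁ (fst R M₂ M₃) ∘ₗ (prodRight R R M₁ M₂ M₃).symm.toLinearMap = fst R _ _ := by
  rw [LinearEquiv.comp_toLinearMap_symm_eq]
  exact TensorProduct.ext' fun _ _ => by simp

theorem TensorProduct.lTensor_snd_comp_prodRight_symm :
    lTensor M₁ (snd R M₂ M₃) ∘ₗ (prodRight R R M₁ M₂ M₃).symm.toLinearMap = snd R _ _ := by
  rw [LinearEquiv.comp_toLinearMap_symm_eq]
  exact TensorProduct.ext' fun _ _ => by simp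

end ProdRight

section CoefficientMaps

variable {A : Type} [Ring A] [Algebra F2 A]
variable {M N P N' P' : Type}
  [AddCommGroup M] [Module F2 M] [AddCommGroup N] [Module F2 N] [AddCommGroup P] [Module F2 P]
  [AddCommGroup N'] [Module F2 N'] [AddCommGroup P'] [Module F2 P']

noncomputable def liftA (ψ : N →ₗ[F2] A ⊗[F2] P) : A ⊗[F2] N →ₗ[F2] A ⊗[F2] P :=
  rTensor P (mul' F2 A) ∘ₗ (TensorProduct.assoc F2 A A P).symm.toLinearMap ∘ₗ lTensor A ψ

theorem comp2_eq_liftA_comp (ψ : N →ₗ[F2] A ⊗[F2] P) (φ : M →ₗ[F2] A ⊗[F2] N) :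
    comp2 ψ φ = liftA ψ ∘ₗ φ := rfl

@[simp]
theorem liftA_tmul (ψ : N →ₗ[F2] A ⊗[F2] P) (a : A) (n : N) :
    liftA ψ (a ⊗ₜ n) = rTensor P (mulLeft F2 a) (ψ n) := by
  simp only [liftA, LinearMap.comp_apply, lTensor_tmul, LinearEquiv.coe_coe]
  induction ψ n using TensorProduct.induction_on with
  | zero => simp
  | tmul b p => simp
  | add u v hu hv => simp only [TensorProduct.tmul_add, map_add, hu, hv]

theorem liftA_add (ψ ψ' : N →ₗ[F2] A ⊗[F2] P) : liftA (ψ + ψ') = liftA ψ + liftA ψ' := by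
  simp only [liftA, lTensor_add, comp_add]

theorem liftA_lTensor_comp (g : P →ₗ[F2] P') (ψ : N →ₗ[F2] A ⊗[F2] P) :
    liftA (lTensor A g ∘ₗ ψ) = lTensor A g ∘ₗ liftA ψ :=
  TensorProduct.ext' fun a n => by
    simp only [LinearMap.comp_apply, liftA_tmul, rTensor_lTensor_comm_apply]

theorem liftA_comp_lTensor (ψ : N' →ₗ[F2] A ⊗[F2] P) (f : N →ₗ[F2] N') :
    liftA ψ ∘ₗ lTensor A f = liftA (ψ ∘ₗ f) :=
  TensorProduct.ext' fun a n => by simp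

theorem comp2_add_left (ψ ψ' : N →ₗ[F2] A ⊗[F2] P) (φ : M →ₗ[F2] A ⊗[F2] N) :
    comp2 (ψ + ψ') φ = comp2 ψ φ + comp2 ψ' φ := by
  rw [comp2_eq_liftA_comp, comp2_eq_liftA_comp, comp2_eq_liftA_comp, liftA_add, add_comp]

theorem comp2_add_right (ψ : N →ₗ[F2] A ⊗[F2] P) (φ φ' : M →ₗ[F2] A ⊗[F2] N) :
    comp2 ψ (φ + φ') = comp2 ψ φ + comp2 ψ φ' :=
  comp_add φ φ' (liftA ψ)

variable (dA : A →ₗ[F2] A)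

/-- The differential of the morphism complex from `(M, δM)` to `(N, δN)`. -/
noncomputable def dHom (δM : M →ₗ[F2] A ⊗[F2] M) (δN : N →ₗ[F2] A ⊗[F2] N)
    (φ : M →ₗ[F2] A ⊗[F2] N) : M →ₗ[F2] A ⊗[F2] N :=
  comp2 δN φ + comp2 φ δM + rTensor N dA ∘ₗ φ

theorem isDMor_iff (δM : M →ₗ[F2] A ⊗[F2] M) (δN : N →ₗ[F2] A ⊗[F2] N)
    (φ : M →ₗ[F2] A ⊗[F2] N) : IsDMor dA δM δN φ ↔ dHom dA δM δN φ = 0 := Iff.rfl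

theorem isDHtpy_iff (δM : M →ₗ[F2] A ⊗[F2] M) (δN : N →ₗ[F2] A ⊗[F2] N)
    (φ φ' ν : M →ₗ[F2] A ⊗[F2] N) :
    IsDHtpy dA δM δN φ φ' ν ↔ φ + φ' = dHom dA δM δN ν := Iff.rfl

end CoefficientMaps

section Transport

variable {A : Type} [Ring A] [Algebra F2 A]
variable {M N P Q M' N' P' Q' : Type}
  [AddCommGroup M] [Module F2 M] [AddCommGroup N] [Module F2 N]
  [AddCommGroup P] [Module F2 P] [AddCommGroup Q] [Module F2 Q]
  [AddCommGroup M'] [Module F2 M'] [AddCommGroup N'] [Module F2 N']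
  [AddCommGroup P'] [Module F2 P'] [AddCommGroup Q'] [Module F2 Q']

noncomputable def transport (e : M ≃ₗ[F2] M') (f : N ≃ₗ[F2] N') (φ : M →ₗ[F2] A ⊗[F2] N) :
    M' →ₗ[F2] A ⊗[F2] N' :=
  lTensor A f.toLinearMap ∘ₗ φ ∘ₗ e.symm.toLinearMap

theorem transport_add (e : M ≃ₗ[F2] M') (f : N ≃ₗ[F2] N') (φ φ' : M →ₗ[F2] A ⊗[F2] N) :
    transport e f (φ + φ') = transport e f φ + transport e f φ' := by
  simp only [transport, add_comp, comp_add]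

theorem transport_zero (e : M ≃ₗ[F2] M') (f : N ≃ₗ[F2] N') :
    transport e f (0 : M →ₗ[F2] A ⊗[F2] N) = 0 := by
  simp only [transport, zero_comp, comp_zero]

theorem transport_comp2 (e : M ≃ₗ[F2] M') (f : N ≃ₗ[F2] N') (g : P ≃ₗ[F2] P')
    (ψ : N →ₗ[F2] A ⊗[F2] P) (φ : M →ₗ[F2] A ⊗[F2] N) :
    comp2 (transport f g ψ) (transport e f φ) = transport e g (comp2 ψ φ) := by
  simp only [transport, comp2_eq_liftA_comp, ← comp_assoc, liftA_comp_lTensor]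
  rw [comp_assoc _ (f.symm : N' →ₗ[F2] N), LinearEquiv.comp_coe, LinearEquiv.self_trans_symm,
    LinearEquiv.refl_toLinearMap, comp_id, liftA_lTensor_comp]

theorem rTensor_comp_transport (dA : A →ₗ[F2] A) (e : M ≃ₗ[F2] M') (f : N ≃ₗ[F2] N')
    (φ : M →ₗ[F2] A ⊗[F2] N) :
    rTensor N' dA ∘ₗ transport e f φ = transport e f (rTensor N dA ∘ₗ φ) := by
  simp only [transport, ← comp_assoc, rTensor_comp_lTensor, lTensor_comp_rTensor]

theorem dHom_transport (dA : A →ₗ[F2] A) (e : M ≃ₗ[F2] M') (f : N ≃ₗ[F2] N')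
    (δM : M →ₗ[F2] A ⊗[F2] M) (δN : N →ₗ[F2] A ⊗[F2] N) (φ : M →ₗ[F2] A ⊗[F2] N) :
    dHom dA (transport e e δM) (transport f f δN) (transport e f φ)
      = transport e f (dHom dA δM δN φ) := by
  simp only [dHom, transport_comp2, rTensor_comp_transport, transport_add]

theorem IsDMor.transport {dA : A →ₗ[F2] A} {δM : M →ₗ[F2] A ⊗[F2] M}
    {δN : N →ₗ[F2] A ⊗[F2] N} {φ : M →ₗ[F2] A ⊗[F2] N} (e : M ≃ₗ[F2] M') (f : N ≃ₗ[F2] N')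
    (h : IsDMor dA δM δN φ) :
    IsDMor dA (transport e e δM) (transport f f δN) (transport e f φ) := by
  rw [isDMor_iff] at h ⊢
  rw [dHom_transport, h, transport_zero]

theorem IsDHtpy.transport {dA : A →ₗ[F2] A} {δM : M →ₗ[F2] A ⊗[F2] M}
    {δN : N →ₗ[F2] A ⊗[F2] N} {φ φ' ν : M →ₗ[F2] A ⊗[F2] N} (e : M ≃ₗ[F2] M')
    (f : N ≃ₗ[F2] N') (h : IsDHtpy dA δM δN φ φ' ν) :
    IsDHtpy dA (transport e e δM) (transport f f δN)
      (transport e f φ) (transport e f φ') (transport e f ν) := by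
  rw [isDHtpy_iff] at h ⊢
  rw [dHom_transport, ← h, transport_add]

theorem transport_dbold (e0 : M ≃ₗ[F2] M') (e1 : N ≃ₗ[F2] N') (f0 : P ≃ₗ[F2] P')
    (f1 : Q ≃ₗ[F2] Q') (a : M →ₗ[F2] A ⊗[F2] P) (b : N →ₗ[F2] A ⊗[F2] Q)
    (c : M →ₗ[F2] A ⊗[F2] Q) :
    transport (e0.prodCongr e1) (f0.prodCongr f1) (dbold a b c)
      = dbold (transport e0 f0 a) (transport e1 f1 b) (transport e0 f1 c) := by
  apply LinearMap.ext
  rintro ⟨m, n⟩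
  simp only [dbold, transport, hat0, hat1, hatf, LinearMap.comp_apply, LinearMap.add_apply,
    map_add, ← lTensor_comp_apply]
  have hl : (f0.prodCongr f1).toLinearMap ∘ₗ inl F2 P Q = inl F2 P' Q' ∘ₗ f0.toLinearMap := by
    ext <;> simp
  have hr : (f0.prodCongr f1).toLinearMap ∘ₗ inr F2 P Q = inr F2 P' Q' ∘ₗ f1.toLinearMap := by
    ext <;> simp
  rw [hl, hr]
  simp

theorem hat0_add (φ φ' : M →ₗ[F2] A ⊗[F2] M') :
    hat0 (Q := N) (Q' := N') (φ + φ') = hat0 φ + hat0 φ' := by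
  simp only [hat0, add_comp, comp_add]

theorem hat1_add (φ φ' : N →ₗ[F2] A ⊗[F2] N') :
    hat1 (P := M) (P' := M') (φ + φ') = hat1 φ + hat1 φ' := by
  simp only [hat1, add_comp, comp_add]

end Transport

section RTensorCoeff

variable {A : Type} [Ring A] [Algebra F2 A]
variable {X X' Y Z N N' : Type}
  [AddCommGroup X] [Module F2 X] [AddCommGroup X'] [Module F2 X']
  [AddCommGroup Y] [Module F2 Y] [AddCommGroup Z] [Module F2 Z]
  [AddCommGroup N] [Module F2 N] [AddCommGroup N'] [Module F2 N']

variable (N) in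
/-- `f ⊗ id_N`, with the coefficient moved to the front. -/
noncomputable def rTensorCoeff (f : X →ₗ[F2] A ⊗[F2] Y) : X ⊗[F2] N →ₗ[F2] A ⊗[F2] (Y ⊗[F2] N) :=
  (TensorProduct.assoc F2 A Y N).toLinearMap ∘ₗ rTensor N f

@[simp]
theorem rTensorCoeff_tmul (f : X →ₗ[F2] A ⊗[F2] Y) (x : X) (n : N) :
    rTensorCoeff N f (x ⊗ₜ n) = TensorProduct.assoc F2 A Y N (f x ⊗ₜ n) := rfl

theorem rTensorCoeff_add (f g : X →ₗ[F2] A ⊗[F2] Y) :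
    rTensorCoeff N (f + g) = rTensorCoeff N f + rTensorCoeff N g := by
  simp only [rTensorCoeff, rTensor_add, comp_add]

theorem rTensorCoeff_zero : rTensorCoeff N (0 : X →ₗ[F2] A ⊗[F2] Y) = 0 := by
  simp only [rTensorCoeff, rTensor_zero, comp_zero]

theorem rTensor_assoc_tmul (h : A →ₗ[F2] A) (v : A ⊗[F2] Y) (n : N) :
    rTensor (Y ⊗[F2] N) h (TensorProduct.assoc F2 A Y N (v ⊗ₜ n))
      = TensorProduct.assoc F2 A Y N (rTensor Y h v ⊗ₜ n) := by
  induction v using TensorProduct.induction_on with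
  | zero => simp
  | tmul a y => simp
  | add u v hu hv => simp only [TensorProduct.add_tmul, map_add, hu, hv]

theorem rTensor_comp_rTensorCoeff (h : A →ₗ[F2] A) (f : X →ₗ[F2] A ⊗[F2] Y) :
    rTensor (Y ⊗[F2] N) h ∘ₗ rTensorCoeff N f = rTensorCoeff N (rTensor Y h ∘ₗ f) :=
  TensorProduct.ext' fun x n => rTensor_assoc_tmul h (f x) n

theorem liftA_assoc_tmul (g : Y →ₗ[F2] A ⊗[F2] Z) (v : A ⊗[F2] Y) (n : N) :
    liftA (rTensorCoeff N g) (TensorProduct.assoc F2 A Y N (v ⊗ₜ n))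
      = TensorProduct.assoc F2 A Z N (liftA g v ⊗ₜ n) := by
  induction v using TensorProduct.induction_on with
  | zero => simp
  | tmul a y => simp [rTensor_assoc_tmul]
  | add u v hu hv => simp only [TensorProduct.add_tmul, map_add, hu, hv]

theorem comp2_rTensorCoeff (g : Y →ₗ[F2] A ⊗[F2] Z) (f : X →ₗ[F2] A ⊗[F2] Y) :
    comp2 (rTensorCoeff N g) (rTensorCoeff N f) = rTensorCoeff N (comp2 g f) :=
  TensorProduct.ext' fun x n => liftA_assoc_tmul g (f x) n

theorem liftA_rTensorCoeff_apply (g : Y →ₗ[F2] A ⊗[F2] Z) (f : X →ₗ[F2] A ⊗[F2] Y)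
    (u : X ⊗[F2] N) :
    liftA (rTensorCoeff N g) (rTensorCoeff N f u) = rTensorCoeff N (comp2 g f) u :=
  DFunLike.congr_fun (comp2_rTensorCoeff g f) u

theorem rTensor_rTensorCoeff_apply (h : A →ₗ[F2] A) (f : X →ₗ[F2] A ⊗[F2] Y) (u : X ⊗[F2] N) :
    rTensor (Y ⊗[F2] N) h (rTensorCoeff N f u) = rTensorCoeff N (rTensor Y h ∘ₗ f) u :=
  DFunLike.congr_fun (rTensor_comp_rTensorCoeff h f) u

theorem rTensorCoeff_rTensor (f : X →ₗ[F2] A ⊗[F2] Y) (g : X' →ₗ[F2] X) :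
    rTensorCoeff N f ∘ₗ rTensor N g = rTensorCoeff N (f ∘ₗ g) := by
  simp only [rTensorCoeff, rTensor_comp, comp_assoc]

theorem rTensorCoeff_rTensor_apply (f : X →ₗ[F2] A ⊗[F2] Y) (g : X' →ₗ[F2] X) (u : X' ⊗[F2] N) :
    rTensorCoeff N f (rTensor N g u) = rTensorCoeff N (f ∘ₗ g) u :=
  DFunLike.congr_fun (rTensorCoeff_rTensor f g) u

theorem lTensor_comp_rTensorCoeff (f : X →ₗ[F2] A ⊗[F2] Y) (g : N →ₗ[F2] N') :
    lTensor A (lTensor Y g) ∘ₗ rTensorCoeff N f = rTensorCoeff N' f ∘ₗ lTensor X g := by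
  refine TensorProduct.ext' fun x n => ?_
  simp only [LinearMap.comp_apply, rTensorCoeff_tmul, lTensor_tmul]
  induction f x using TensorProduct.induction_on with
  | zero => simp
  | tmul a y => simp
  | add u v hu hv => simp only [TensorProduct.add_tmul, map_add, hu, hv]

end RTensorCoeff

section BoxTensor

variable {A1 A2 : Type} [Ring A1] [Algebra F2 A1] [Ring A2] [Algebra F2 A2]
variable {Pc : Type} [AddCommGroup Pc] [Module F2 Pc]
variable (d11 : Pc →ₗ[F2] A1 ⊗[F2] Pc) (d12 : Pc ⊗[F2] A2 →ₗ[F2] A1 ⊗[F2] Pc)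
variable {M N L M' N' : Type}
  [AddCommGroup M] [Module F2 M] [AddCommGroup N] [Module F2 N]
  [AddCommGroup L] [Module F2 L] [AddCommGroup M'] [Module F2 M']
  [AddCommGroup N'] [Module F2 N']

theorem boxδ_eq (δ : N →ₗ[F2] A2 ⊗[F2] N) :
    boxδ d11 d12 δ = rTensorCoeff N d11 + boxMor d12 δ := rfl

theorem boxMor_tmul (φ : M →ₗ[F2] A2 ⊗[F2] N) (p : Pc) (m : M) :
    boxMor d12 φ (p ⊗ₜ m) = rTensorCoeff N (d12 ∘ₗ TensorProduct.mk F2 Pc A2 p) (φ m) := by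
  simp only [boxMor, LinearMap.comp_apply, lTensor_tmul, LinearEquiv.coe_coe]
  induction φ m using TensorProduct.induction_on with
  | zero => simp
  | tmul a n => simp
  | add u v hu hv => simp only [TensorProduct.tmul_add, map_add, hu, hv]

theorem boxMor_add (φ φ' : M →ₗ[F2] A2 ⊗[F2] N) :
    boxMor d12 (φ + φ') = boxMor d12 φ + boxMor d12 φ' := by
  simp only [boxMor, lTensor_add, comp_add]

theorem boxMor_zero : boxMor d12 (0 : M →ₗ[F2] A2 ⊗[F2] N) = 0 := by
  simp only [boxMor, lTensor_zero, comp_zero]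

theorem boxMor_lTensor_comp_comp (g : N →ₗ[F2] N') (φ : M →ₗ[F2] A2 ⊗[F2] N)
    (f : M' →ₗ[F2] M) :
    boxMor d12 (lTensor A2 g ∘ₗ φ ∘ₗ f)
      = lTensor A1 (lTensor Pc g) ∘ₗ boxMor d12 φ ∘ₗ lTensor Pc f :=
  TensorProduct.ext' fun p m => by
    simp only [LinearMap.comp_apply, lTensor_tmul, boxMor_tmul]
    exact (DFunLike.congr_fun (lTensor_comp_rTensorCoeff _ g) _).symm

theorem liftA_boxMor_assoc_tmul (ψ : N →ₗ[F2] A2 ⊗[F2] L) (v : A1 ⊗[F2] Pc) (n : N) :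
    liftA (boxMor d12 ψ) (TensorProduct.assoc F2 A1 Pc N (v ⊗ₜ n))
      = rTensorCoeff L (liftA d12 ∘ₗ (TensorProduct.assoc F2 A1 Pc A2).toLinearMap ∘ₗ
          TensorProduct.mk F2 (A1 ⊗[F2] Pc) A2 v) (ψ n) := by
  induction v using TensorProduct.induction_on with
  | zero => simp [rTensorCoeff_zero]
  | tmul b r =>
    simp only [TensorProduct.assoc_tmul, liftA_tmul, boxMor_tmul]
    rw [← LinearMap.comp_apply (rTensor _ _), rTensor_comp_rTensorCoeff]
    congr 2
    ext c
    simp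
  | add u v hu hv =>
    simp only [TensorProduct.add_tmul, map_add, hu, hv, comp_add, rTensorCoeff_add,
      LinearMap.add_apply]

end BoxTensor

section DARelations

variable {A1 A2 : Type} [Ring A1] [Algebra F2 A1] [Ring A2] [Algebra F2 A2]
variable {Pc : Type} [AddCommGroup Pc] [Module F2 Pc]
variable {d11 : Pc →ₗ[F2] A1 ⊗[F2] Pc} {d12 : Pc ⊗[F2] A2 →ₗ[F2] A1 ⊗[F2] Pc}
variable {M N L : Type}
  [AddCommGroup M] [Module F2 M] [AddCommGroup N] [Module F2 N]
  [AddCommGroup L] [Module F2 L]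

/-- The DA structure relation pairing `δ¹₁` with `δ¹₂` and the differentials. -/
def IsDALeibniz (dA1 : A1 →ₗ[F2] A1) (dA2 : A2 →ₗ[F2] A2) (d11 : Pc →ₗ[F2] A1 ⊗[F2] Pc)
    (d12 : Pc ⊗[F2] A2 →ₗ[F2] A1 ⊗[F2] Pc) : Prop :=
  comp2 d11 d12 + comp2 d12 ((TensorProduct.assoc F2 A1 Pc A2).toLinearMap ∘ₗ rTensor A2 d11)
    + d12 ∘ₗ lTensor Pc dA2 + rTensor Pc dA1 ∘ₗ d12 = 0

/-- The DA structure relation `δ¹₂(p, a b) = δ¹₂(δ¹₂(p, a), b)` (no higher action `δ¹₃`). -/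
def IsDAMultiplicative (d12 : Pc ⊗[F2] A2 →ₗ[F2] A1 ⊗[F2] Pc) : Prop :=
  comp2 d12 ((TensorProduct.assoc F2 A1 Pc A2).toLinearMap ∘ₗ rTensor A2 d12)
    = d12 ∘ₗ lTensor Pc (mul' F2 A2) ∘ₗ (TensorProduct.assoc F2 Pc A2 A2).toLinearMap

theorem comp2_boxMor (hP3 : IsDAMultiplicative d12)
    (ψ : N →ₗ[F2] A2 ⊗[F2] L) (φ : M →ₗ[F2] A2 ⊗[F2] N) :
    comp2 (boxMor d12 ψ) (boxMor d12 φ) = boxMor d12 (comp2 ψ φ) := by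
  have hmul (p : Pc) (a : A2) :
      liftA d12 ∘ₗ (TensorProduct.assoc F2 A1 Pc A2).toLinearMap ∘ₗ
          TensorProduct.mk F2 (A1 ⊗[F2] Pc) A2 (d12 (p ⊗ₜ a))
        = d12 ∘ₗ TensorProduct.mk F2 Pc A2 p ∘ₗ mulLeft F2 a :=
    LinearMap.ext fun c => by
      simpa [comp2_eq_liftA_comp] using DFunLike.congr_fun hP3 ((p ⊗ₜ a) ⊗ₜ c)
  refine TensorProduct.ext' fun p m => ?_
  simp only [comp2_eq_liftA_comp, LinearMap.comp_apply, boxMor_tmul]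
  induction φ m using TensorProduct.induction_on with
  | zero => simp
  | tmul a n =>
    rw [rTensorCoeff_tmul, liftA_boxMor_assoc_tmul, LinearMap.comp_apply,
      TensorProduct.mk_apply, hmul, liftA_tmul,
      ← LinearMap.comp_apply _ (rTensor L (mulLeft F2 a)), rTensorCoeff_rTensor,
      comp_assoc]
  | add u v hu hv => simp only [map_add, hu, hv]

theorem boxMor_leibniz {dA1 : A1 →ₗ[F2] A1} {dA2 : A2 →ₗ[F2] A2}
    (hP2 : IsDALeibniz dA1 dA2 d11 d12)
    (φ : M →ₗ[F2] A2 ⊗[F2] N) :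
    comp2 (rTensorCoeff N d11) (boxMor d12 φ) + comp2 (boxMor d12 φ) (rTensorCoeff M d11)
        + rTensor (Pc ⊗[F2] N) dA1 ∘ₗ boxMor d12 φ
      = boxMor d12 (rTensor N dA2 ∘ₗ φ) := by
  have hp (p : Pc) :
      comp2 d11 (d12 ∘ₗ TensorProduct.mk F2 Pc A2 p)
          + liftA d12 ∘ₗ (TensorProduct.assoc F2 A1 Pc A2).toLinearMap ∘ₗ
              TensorProduct.mk F2 (A1 ⊗[F2] Pc) A2 (d11 p)
          + rTensor Pc dA1 ∘ₗ d12 ∘ₗ TensorProduct.mk F2 Pc A2 p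
        = (d12 ∘ₗ TensorProduct.mk F2 Pc A2 p) ∘ₗ dA2 :=
    LinearMap.ext fun a => ZModModule.eq_of_add_eq_zero <| by
      have := DFunLike.congr_fun hP2 (p ⊗ₜ a)
      simp only [comp2_eq_liftA_comp, LinearMap.add_apply, LinearMap.comp_apply,
        LinearMap.zero_apply, rTensor_tmul, lTensor_tmul, LinearEquiv.coe_coe,
        TensorProduct.mk_apply] at this ⊢
      rw [← this]
      abel
  refine TensorProduct.ext' fun p m => ?_
  simp only [LinearMap.add_apply, comp2_eq_liftA_comp, LinearMap.comp_apply, boxMor_tmul,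
    rTensorCoeff_tmul, liftA_boxMor_assoc_tmul, liftA_rTensorCoeff_apply,
    rTensor_rTensorCoeff_apply, rTensorCoeff_rTensor_apply]
  rw [← hp, rTensorCoeff_add, rTensorCoeff_add]
  rfl

end DARelations

section BoxFunctor

variable {A1 A2 : Type} [Ring A1] [Algebra F2 A1] [Ring A2] [Algebra F2 A2]
variable {dA1 : A1 →ₗ[F2] A1} {dA2 : A2 →ₗ[F2] A2}
variable {Pc : Type} [AddCommGroup Pc] [Module F2 Pc]
variable {d11 : Pc →ₗ[F2] A1 ⊗[F2] Pc} {d12 : Pc ⊗[F2] A2 →ₗ[F2] A1 ⊗[F2] Pc}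
variable {M N : Type} [AddCommGroup M] [Module F2 M] [AddCommGroup N] [Module F2 N]

theorem dHom_boxMor (hP2 : IsDALeibniz dA1 dA2 d11 d12) (hP3 : IsDAMultiplicative d12)
    (δM : M →ₗ[F2] A2 ⊗[F2] M) (δN : N →ₗ[F2] A2 ⊗[F2] N) (φ : M →ₗ[F2] A2 ⊗[F2] N) :
    dHom dA1 (boxδ d11 d12 δM) (boxδ d11 d12 δN) (boxMor d12 φ)
      = boxMor d12 (dHom dA2 δM δN φ) := by
  rw [dHom, dHom, boxδ_eq, boxδ_eq, comp2_add_left, comp2_add_right, comp2_boxMor hP3,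
    comp2_boxMor hP3, boxMor_add, boxMor_add, ← boxMor_leibniz hP2]
  abel

theorem isTypeD_boxδ (hP1 : IsTypeD dA1 d11) (hP2 : IsDALeibniz dA1 dA2 d11 d12)
    (hP3 : IsDAMultiplicative d12) {δ : N →ₗ[F2] A2 ⊗[F2] N} (h : IsTypeD dA2 δ) :
    IsTypeD dA1 (boxδ d11 d12 δ) := by
  have hR : comp2 (rTensorCoeff N d11) (rTensorCoeff N d11)
      + rTensor (Pc ⊗[F2] N) dA1 ∘ₗ rTensorCoeff N d11 = 0 := by
    rw [comp2_rTensorCoeff, rTensor_comp_rTensorCoeff, ← rTensorCoeff_add, hP1,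
      rTensorCoeff_zero]
  unfold IsTypeD at h ⊢
  calc comp2 (boxδ d11 d12 δ) (boxδ d11 d12 δ) + rTensor (Pc ⊗[F2] N) dA1 ∘ₗ boxδ d11 d12 δ
      = (comp2 (rTensorCoeff N d11) (rTensorCoeff N d11)
            + rTensor (Pc ⊗[F2] N) dA1 ∘ₗ rTensorCoeff N d11)
          + (comp2 (rTensorCoeff N d11) (boxMor d12 δ) + comp2 (boxMor d12 δ) (rTensorCoeff N d11)
            + rTensor (Pc ⊗[F2] N) dA1 ∘ₗ boxMor d12 δ)
          + comp2 (boxMor d12 δ) (boxMor d12 δ) := by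
        rw [boxδ_eq, comp2_add_left, comp2_add_right, comp2_add_right, comp_add]
        abel
    _ = boxMor d12 (comp2 δ δ + rTensor N dA2 ∘ₗ δ) := by
        rw [hR, boxMor_leibniz hP2, comp2_boxMor hP3, boxMor_add]
        abel
    _ = 0 := by rw [h, boxMor_zero]

theorem IsDMor.box (hP2 : IsDALeibniz dA1 dA2 d11 d12) (hP3 : IsDAMultiplicative d12)
    {δM : M →ₗ[F2] A2 ⊗[F2] M} {δN : N →ₗ[F2] A2 ⊗[F2] N} {φ : M →ₗ[F2] A2 ⊗[F2] N}
    (h : IsDMor dA2 δM δN φ) :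
    IsDMor dA1 (boxδ d11 d12 δM) (boxδ d11 d12 δN) (boxMor d12 φ) := by
  rw [isDMor_iff] at h ⊢
  rw [dHom_boxMor hP2 hP3, h, boxMor_zero]

theorem IsDHtpy.box (hP2 : IsDALeibniz dA1 dA2 d11 d12) (hP3 : IsDAMultiplicative d12)
    {δM : M →ₗ[F2] A2 ⊗[F2] M} {δN : N →ₗ[F2] A2 ⊗[F2] N} {φ φ' ν : M →ₗ[F2] A2 ⊗[F2] N}
    (h : IsDHtpy dA2 δM δN φ φ' ν) :
    IsDHtpy dA1 (boxδ d11 d12 δM) (boxδ d11 d12 δN)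
      (boxMor d12 φ) (boxMor d12 φ') (boxMor d12 ν) := by
  rw [isDHtpy_iff] at h ⊢
  rw [dHom_boxMor hP2 hP3, ← h, boxMor_add]

end BoxFunctor

section Cones

variable {A : Type} [Ring A] [Algebra F2 A]
variable {Pc C C' C0 C1 C0' C1' : Type} [AddCommGroup Pc] [Module F2 Pc]
  [AddCommGroup C] [Module F2 C] [AddCommGroup C'] [Module F2 C']
  [AddCommGroup C0] [Module F2 C0] [AddCommGroup C1] [Module F2 C1]
  [AddCommGroup C0'] [Module F2 C0'] [AddCommGroup C1'] [Module F2 C1']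

theorem transport_prodRight_lTensor_comp_comp (i : C' →ₗ[F2] C0' × C1')
    (Φ : Pc ⊗[F2] C →ₗ[F2] A ⊗[F2] (Pc ⊗[F2] C')) (j : C0 × C1 →ₗ[F2] C) :
    transport (TensorProduct.prodRight F2 F2 Pc C0 C1) (TensorProduct.prodRight F2 F2 Pc C0' C1')
        (lTensor A (lTensor Pc i) ∘ₗ Φ ∘ₗ lTensor Pc j)
      = lTensor A ((TensorProduct.prodRight F2 F2 Pc C0' C1').toLinearMap ∘ₗ lTensor Pc i)
          ∘ₗ Φ ∘ₗ lTensor Pc j ∘ₗ (TensorProduct.prodRight F2 F2 Pc C0 C1).symm.toLinearMap := by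
  simp only [transport, lTensor_comp, comp_assoc]

theorem transport_hat0 (Φ : Pc ⊗[F2] C0 →ₗ[F2] A ⊗[F2] (Pc ⊗[F2] C0')) :
    transport (TensorProduct.prodRight F2 F2 Pc C0 C1) (TensorProduct.prodRight F2 F2 Pc C0' C1')
        (lTensor A (lTensor Pc (inl F2 C0' C1')) ∘ₗ Φ ∘ₗ lTensor Pc (fst F2 C0 C1))
      = hat0 Φ := by
  rw [transport_prodRight_lTensor_comp_comp, TensorProduct.prodRight_comp_lTensor_inl,
    TensorProduct.lTensor_fst_comp_prodRight_symm]
  rfl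

theorem transport_hat1 (Φ : Pc ⊗[F2] C1 →ₗ[F2] A ⊗[F2] (Pc ⊗[F2] C1')) :
    transport (TensorProduct.prodRight F2 F2 Pc C0 C1) (TensorProduct.prodRight F2 F2 Pc C0' C1')
        (lTensor A (lTensor Pc (inr F2 C0' C1')) ∘ₗ Φ ∘ₗ lTensor Pc (snd F2 C0 C1))
      = hat1 Φ := by
  rw [transport_prodRight_lTensor_comp_comp, TensorProduct.prodRight_comp_lTensor_inr,
    TensorProduct.lTensor_snd_comp_prodRight_symm]
  rfl

theorem transport_hatf (Φ : Pc ⊗[F2] C0 →ₗ[F2] A ⊗[F2] (Pc ⊗[F2] C1')) :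
    transport (TensorProduct.prodRight F2 F2 Pc C0 C1) (TensorProduct.prodRight F2 F2 Pc C0' C1')
        (lTensor A (lTensor Pc (inr F2 C0' C1')) ∘ₗ Φ ∘ₗ lTensor Pc (fst F2 C0 C1))
      = hatf Φ := by
  rw [transport_prodRight_lTensor_comp_comp, TensorProduct.prodRight_comp_lTensor_inr,
    TensorProduct.lTensor_fst_comp_prodRight_symm]
  rfl

theorem transport_rTensorCoeff_prod (f : Pc →ₗ[F2] A ⊗[F2] Pc) :
    transport (TensorProduct.prodRight F2 F2 Pc C0 C1) (TensorProduct.prodRight F2 F2 Pc C0 C1)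
        (rTensorCoeff (C0 × C1) f)
      = hat0 (rTensorCoeff C0 f) + hat1 (rTensorCoeff C1 f) := by
  have hsplit : rTensorCoeff (C0 × C1) f
      = lTensor A (lTensor Pc (inl F2 C0 C1)) ∘ₗ rTensorCoeff C0 f ∘ₗ lTensor Pc (fst F2 C0 C1)
        + lTensor A (lTensor Pc (inr F2 C0 C1)) ∘ₗ rTensorCoeff C1 f
          ∘ₗ lTensor Pc (snd F2 C0 C1) := by
    rw [← comp_assoc, ← comp_assoc, lTensor_comp_rTensorCoeff, lTensor_comp_rTensorCoeff,
      comp_assoc, comp_assoc, ← lTensor_comp, ← lTensor_comp, ← comp_add, ← lTensor_add]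
    have hid : inl F2 C0 C1 ∘ₗ fst F2 C0 C1 + inr F2 C0 C1 ∘ₗ snd F2 C0 C1 = LinearMap.id :=
      coprod_inl_inr
    rw [hid, lTensor_id, comp_id]
  rw [hsplit, transport_add, transport_hat0, transport_hat1]

end Cones

section BoxCones

variable {A1 A2 : Type} [Ring A1] [Algebra F2 A1] [Ring A2] [Algebra F2 A2]
variable {dA1 : A1 →ₗ[F2] A1} {dA2 : A2 →ₗ[F2] A2}
variable {Pc : Type} [AddCommGroup Pc] [Module F2 Pc]
variable {d11 : Pc →ₗ[F2] A1 ⊗[F2] Pc} {d12 : Pc ⊗[F2] A2 →ₗ[F2] A1 ⊗[F2] Pc}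
variable {C0 C1 C0' C1' C0'' C1'' : Type}
  [AddCommGroup C0] [Module F2 C0] [AddCommGroup C1] [Module F2 C1]
  [AddCommGroup C0'] [Module F2 C0'] [AddCommGroup C1'] [Module F2 C1']
  [AddCommGroup C0''] [Module F2 C0''] [AddCommGroup C1''] [Module F2 C1'']

theorem boxCone_eq_transport (ψ : C0 × C1 →ₗ[F2] A2 ⊗[F2] (C0' × C1')) :
    boxCone d12 ψ = transport (TensorProduct.prodRight F2 F2 Pc C0 C1)
      (TensorProduct.prodRight F2 F2 Pc C0' C1') (boxMor d12 ψ) := rfl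

theorem boxCone_dbold (a : C0 →ₗ[F2] A2 ⊗[F2] C0') (b : C1 →ₗ[F2] A2 ⊗[F2] C1')
    (c : C0 →ₗ[F2] A2 ⊗[F2] C1') :
    boxCone d12 (dbold a b c) = dbold (boxMor d12 a) (boxMor d12 b) (boxMor d12 c) := by
  rw [boxCone_eq_transport, dbold, boxMor_add, boxMor_add, transport_add, transport_add, hat0,
    hat1, hatf, boxMor_lTensor_comp_comp, boxMor_lTensor_comp_comp, boxMor_lTensor_comp_comp,
    transport_hat0, transport_hat1, transport_hatf]
  rfl

theorem transport_boxδ_dbold (δ0 : C0 →ₗ[F2] A2 ⊗[F2] C0) (δ1 : C1 →ₗ[F2] A2 ⊗[F2] C1)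
    (c : C0 →ₗ[F2] A2 ⊗[F2] C1) :
    transport (TensorProduct.prodRight F2 F2 Pc C0 C1) (TensorProduct.prodRight F2 F2 Pc C0 C1)
        (boxδ d11 d12 (dbold δ0 δ1 c))
      = dbold (boxδ d11 d12 δ0) (boxδ d11 d12 δ1) (boxMor d12 c) := by
  rw [boxδ_eq, transport_add, transport_rTensorCoeff_prod, ← boxCone_eq_transport, boxCone_dbold,
    boxδ_eq, boxδ_eq, dbold, dbold, hat0_add, hat1_add]
  abel

theorem comp2_boxCone (hP3 : IsDAMultiplicative d12)
    (ψ : C0' × C1' →ₗ[F2] A2 ⊗[F2] (C0'' × C1'')) (φ : C0 × C1 →ₗ[F2] A2 ⊗[F2] (C0' × C1')) :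
    comp2 (boxCone d12 ψ) (boxCone d12 φ) = boxCone d12 (comp2 ψ φ) := by
  rw [boxCone_eq_transport, boxCone_eq_transport, transport_comp2, comp2_boxMor hP3]
  rfl

theorem IsDHtpy.boxCone (hP2 : IsDALeibniz dA1 dA2 d11 d12) (hP3 : IsDAMultiplicative d12)
    {δ0 : C0 →ₗ[F2] A2 ⊗[F2] C0} {δ1 : C1 →ₗ[F2] A2 ⊗[F2] C1} {c : C0 →ₗ[F2] A2 ⊗[F2] C1}
    {δ0' : C0' →ₗ[F2] A2 ⊗[F2] C0'} {δ1' : C1' →ₗ[F2] A2 ⊗[F2] C1'}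
    {c' : C0' →ₗ[F2] A2 ⊗[F2] C1'} {φ φ' ν : C0 × C1 →ₗ[F2] A2 ⊗[F2] (C0' × C1')}
    (h : IsDHtpy dA2 (dbold δ0 δ1 c) (dbold δ0' δ1' c') φ φ' ν) :
    IsDHtpy dA1 (dbold (boxδ d11 d12 δ0) (boxδ d11 d12 δ1) (boxMor d12 c))
      (dbold (boxδ d11 d12 δ0') (boxδ d11 d12 δ1') (boxMor d12 c'))
      (boxCone d12 φ) (boxCone d12 φ') (boxCone d12 ν) := by
  rw [← transport_boxδ_dbold, ← transport_boxδ_dbold]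
  exact (h.box hP2 hP3).transport _ _

end BoxCones

theorem stmt16_general {A1 A2 : Type} [Ring A1] [Algebra F2 A1] [Ring A2] [Algebra F2 A2]
    (dA1 : A1 →ₗ[F2] A1)
    (dA2 : A2 →ₗ[F2] A2)
    -- a DA bimodule P over (A₁, A₂), via its actions δ¹₁ and δ¹₂:
    {Pc : Type} [AddCommGroup Pc] [Module F2 Pc]
    (d11 : Pc →ₗ[F2] A1 ⊗[F2] Pc) (d12 : Pc ⊗[F2] A2 →ₗ[F2] A1 ⊗[F2] Pc)
    -- the DA structure relations:
    (hP1 : comp2 d11 d11 + rTensor Pc dA1 ∘ₗ d11 = 0)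
    (hP2 : comp2 d11 d12
        + comp2 d12 ((TensorProduct.assoc F2 A1 Pc A2).toLinearMap ∘ₗ rTensor A2 d11)
        + d12 ∘ₗ lTensor Pc dA2 + rTensor Pc dA1 ∘ₗ d12 = 0)
    (hP3 : comp2 d12 ((TensorProduct.assoc F2 A1 Pc A2).toLinearMap ∘ₗ rTensor A2 d12)
        = d12 ∘ₗ lTensor Pc (mul' F2 A2) ∘ₗ (TensorProduct.assoc F2 Pc A2 A2).toLinearMap)
    -- a typewriter M in type D structures over A₂:
    (X : TWOb A2 dA2) :
    -- P ⊠ M is a typewriter in type D structures over A₁: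
    (IsTypeD dA1 (boxδ d11 d12 X.δ0) ∧ IsTypeD dA1 (boxδ d11 d12 X.δ1) ∧
     IsDMor dA1 (boxδ d11 d12 X.δ0) (boxδ d11 d12 X.δ1) (boxMor d12 X.Df) ∧
     IsDMor dA1 (boxδ d11 d12 X.δ0) (boxδ d11 d12 X.δ1) (boxMor d12 X.Dh) ∧
     IsDMor dA1
       (dbold (boxδ d11 d12 X.δ0) (boxδ d11 d12 X.δ1) (boxMor d12 X.Df))
       (dbold (boxδ d11 d12 X.δ0) (boxδ d11 d12 X.δ1) (boxMor d12 X.Dh))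
       (boxCone d12 X.DCR)) ∧
    -- P ⊠ (·) sends morphisms of typewriters to morphisms of typewriters:
    (∀ (Y : TWOb A2 dA2) (T : TWHom X Y),
      IsDMor dA1 (boxδ d11 d12 X.δ0) (boxδ d11 d12 Y.δ0) (boxMor d12 T.t0) ∧
      IsDMor dA1 (boxδ d11 d12 X.δ1) (boxδ d11 d12 Y.δ1) (boxMor d12 T.t1) ∧
      (comp2 (boxMor d12 T.t1) (boxMor d12 X.Df)
          + comp2 (boxMor d12 Y.Df) (boxMor d12 T.t0)
        = comp2 (boxδ d11 d12 Y.δ1) (boxMor d12 T.tf)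
          + comp2 (boxMor d12 T.tf) (boxδ d11 d12 X.δ0)
          + rTensor (Pc ⊗[F2] Y.C1) dA1 ∘ₗ boxMor d12 T.tf) ∧
      (comp2 (boxMor d12 T.t1) (boxMor d12 X.Dh)
          + comp2 (boxMor d12 Y.Dh) (boxMor d12 T.t0)
        = comp2 (boxδ d11 d12 Y.δ1) (boxMor d12 T.th)
          + comp2 (boxMor d12 T.th) (boxδ d11 d12 X.δ0)
          + rTensor (Pc ⊗[F2] Y.C1) dA1 ∘ₗ boxMor d12 T.th) ∧
      (comp2 (dbold (boxMor d12 T.t0) (boxMor d12 T.t1) (boxMor d12 T.th))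
            (boxCone d12 X.DCR)
          + comp2 (boxCone d12 Y.DCR)
            (dbold (boxMor d12 T.t0) (boxMor d12 T.t1) (boxMor d12 T.tf))
        = comp2 (dbold (boxδ d11 d12 Y.δ0) (boxδ d11 d12 Y.δ1) (boxMor d12 Y.Dh))
            (boxCone d12 T.tcr)
          + comp2 (boxCone d12 T.tcr)
            (dbold (boxδ d11 d12 X.δ0) (boxδ d11 d12 X.δ1) (boxMor d12 X.Df))
          + rTensor ((Pc ⊗[F2] Y.C0) × (Pc ⊗[F2] Y.C1)) dA1 ∘ₗ boxCone d12 T.tcr)) ∧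
    -- and sends homotopies of typewriter morphisms to homotopies (hence
    -- homotopy equivalences to homotopy equivalences):
    (∀ (Y : TWOb A2 dA2) (S T : TWHom X Y) (H : TWHtpy S T),
      IsDHtpy dA1 (boxδ d11 d12 X.δ0) (boxδ d11 d12 Y.δ0)
        (boxMor d12 S.t0) (boxMor d12 T.t0) (boxMor d12 H.k0) ∧
      IsDHtpy dA1 (boxδ d11 d12 X.δ1) (boxδ d11 d12 Y.δ1)
        (boxMor d12 S.t1) (boxMor d12 T.t1) (boxMor d12 H.k1) ∧
      IsDHtpy dA1
        (dbold (boxδ d11 d12 X.δ0) (boxδ d11 d12 X.δ1) (boxMor d12 X.Df))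
        (dbold (boxδ d11 d12 Y.δ0) (boxδ d11 d12 Y.δ1) (boxMor d12 Y.Df))
        (dbold (boxMor d12 S.t0) (boxMor d12 S.t1) (boxMor d12 S.tf))
        (dbold (boxMor d12 T.t0) (boxMor d12 T.t1) (boxMor d12 T.tf))
        (dbold (boxMor d12 H.k0) (boxMor d12 H.k1) (boxMor d12 H.kf)) ∧
      IsDHtpy dA1
        (dbold (boxδ d11 d12 X.δ0) (boxδ d11 d12 X.δ1) (boxMor d12 X.Dh))
        (dbold (boxδ d11 d12 Y.δ0) (boxδ d11 d12 Y.δ1) (boxMor d12 Y.Dh))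
        (dbold (boxMor d12 S.t0) (boxMor d12 S.t1) (boxMor d12 S.th))
        (dbold (boxMor d12 T.t0) (boxMor d12 T.t1) (boxMor d12 T.th))
        (dbold (boxMor d12 H.k0) (boxMor d12 H.k1) (boxMor d12 H.kh)) ∧
      IsDHtpy dA1
        (dbold (dbold (boxδ d11 d12 X.δ0) (boxδ d11 d12 X.δ1) (boxMor d12 X.Df))
          (dbold (boxδ d11 d12 X.δ0) (boxδ d11 d12 X.δ1) (boxMor d12 X.Dh))
          (boxCone d12 X.DCR))
        (dbold (dbold (boxδ d11 d12 Y.δ0) (boxδ d11 d12 Y.δ1) (boxMor d12 Y.Df))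
          (dbold (boxδ d11 d12 Y.δ0) (boxδ d11 d12 Y.δ1) (boxMor d12 Y.Dh))
          (boxCone d12 Y.DCR))
        (dbold (dbold (boxMor d12 S.t0) (boxMor d12 S.t1) (boxMor d12 S.tf))
          (dbold (boxMor d12 S.t0) (boxMor d12 S.t1) (boxMor d12 S.th))
          (boxCone d12 S.tcr))
        (dbold (dbold (boxMor d12 T.t0) (boxMor d12 T.t1) (boxMor d12 T.tf))
          (dbold (boxMor d12 T.t0) (boxMor d12 T.t1) (boxMor d12 T.th))
          (boxCone d12 T.tcr))
        (dbold (dbold (boxMor d12 H.k0) (boxMor d12 H.k1) (boxMor d12 H.kf))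
          (dbold (boxMor d12 H.k0) (boxMor d12 H.k1) (boxMor d12 H.kh))
          (boxCone d12 H.kcr))) := by
  refine ⟨⟨isTypeD_boxδ hP1 hP2 hP3 X.h0, isTypeD_boxδ hP1 hP2 hP3 X.h1, X.hf.box hP2 hP3,
      X.hh.box hP2 hP3, ?_⟩, fun Y T => ⟨T.h0.box hP2 hP3, T.h1.box hP2 hP3, ?_, ?_, ?_⟩,
      fun Y S T H => ⟨H.p0.box hP2 hP3, H.p1.box hP2 hP3, ?_, ?_, ?_⟩⟩
  · rw [← transport_boxδ_dbold, ← transport_boxδ_dbold, boxCone_eq_transport]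
    exact (X.hcr.box hP2 hP3).transport _ _
  -- `T.hf`, `T.hh` and `T.hcr` are, by definition, homotopies between the two composites
  · rw [comp2_boxMor hP3, comp2_boxMor hP3]
    exact IsDHtpy.box hP2 hP3 T.hf
  · rw [comp2_boxMor hP3, comp2_boxMor hP3]
    exact IsDHtpy.box hP2 hP3 T.hh
  · rw [← boxCone_dbold, ← boxCone_dbold, comp2_boxCone hP3, comp2_boxCone hP3]
    exact IsDHtpy.boxCone hP2 hP3 T.hcr
  · rw [← boxCone_dbold, ← boxCone_dbold, ← boxCone_dbold]
    exact H.pf.boxCone hP2 hP3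
  · rw [← boxCone_dbold, ← boxCone_dbold, ← boxCone_dbold]
    exact H.ph.boxCone hP2 hP3
  -- both levels of the cone of cones are split along `prodRight`
  · simp only [← boxCone_dbold, ← transport_boxδ_dbold, boxCone_eq_transport]
    simp only [← transport_dbold, ← boxCone_dbold]
    exact (H.pcr.boxCone hP2 hP3).transport _ _

theorem stmt16 {A1 A2 : Type} [Ring A1] [Algebra F2 A1] [Ring A2] [Algebra F2 A2]
    (dA1 : A1 →ₗ[F2] A1)
    (hL1 : ∀ a b : A1, dA1 (a * b) = dA1 a * b + a * dA1 b) (hd1 : dA1 ∘ₗ dA1 = 0)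
    (dA2 : A2 →ₗ[F2] A2)
    (hL2 : ∀ a b : A2, dA2 (a * b) = dA2 a * b + a * dA2 b) (hd2 : dA2 ∘ₗ dA2 = 0)
    -- a DA bimodule P over (A₁, A₂), via its actions δ¹₁ and δ¹₂:
    {Pc : Type} [AddCommGroup Pc] [Module F2 Pc]
    (d11 : Pc →ₗ[F2] A1 ⊗[F2] Pc) (d12 : Pc ⊗[F2] A2 →ₗ[F2] A1 ⊗[F2] Pc)
    -- the DA structure relations:
    (hP1 : comp2 d11 d11 + rTensor Pc dA1 ∘ₗ d11 = 0)
    (hP2 : comp2 d11 d12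
        + comp2 d12 ((TensorProduct.assoc F2 A1 Pc A2).toLinearMap ∘ₗ rTensor A2 d11)
        + d12 ∘ₗ lTensor Pc dA2 + rTensor Pc dA1 ∘ₗ d12 = 0)
    (hP3 : comp2 d12 ((TensorProduct.assoc F2 A1 Pc A2).toLinearMap ∘ₗ rTensor A2 d12)
        = d12 ∘ₗ lTensor Pc (mul' F2 A2) ∘ₗ (TensorProduct.assoc F2 Pc A2 A2).toLinearMap)
    (hP4 : d12 ∘ₗ ((TensorProduct.mk F2 Pc A2).flip 1) = idD A1 Pc)
    -- a typewriter M in type D structures over A₂: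
    (X : TWOb A2 dA2) :
    -- P ⊠ M is a typewriter in type D structures over A₁:
    (IsTypeD dA1 (boxδ d11 d12 X.δ0) ∧ IsTypeD dA1 (boxδ d11 d12 X.δ1) ∧
     IsDMor dA1 (boxδ d11 d12 X.δ0) (boxδ d11 d12 X.δ1) (boxMor d12 X.Df) ∧
     IsDMor dA1 (boxδ d11 d12 X.δ0) (boxδ d11 d12 X.δ1) (boxMor d12 X.Dh) ∧
     IsDMor dA1
       (dbold (boxδ d11 d12 X.δ0) (boxδ d11 d12 X.δ1) (boxMor d12 X.Df))
       (dbold (boxδ d11 d12 X.δ0) (boxδ d11 d12 X.δ1) (boxMor d12 X.Dh))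
       (boxCone d12 X.DCR)) ∧
    -- P ⊠ (·) sends morphisms of typewriters to morphisms of typewriters:
    (∀ (Y : TWOb A2 dA2) (T : TWHom X Y),
      IsDMor dA1 (boxδ d11 d12 X.δ0) (boxδ d11 d12 Y.δ0) (boxMor d12 T.t0) ∧
      IsDMor dA1 (boxδ d11 d12 X.δ1) (boxδ d11 d12 Y.δ1) (boxMor d12 T.t1) ∧
      (comp2 (boxMor d12 T.t1) (boxMor d12 X.Df)
          + comp2 (boxMor d12 Y.Df) (boxMor d12 T.t0)
        = comp2 (boxδ d11 d12 Y.δ1) (boxMor d12 T.tf)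
          + comp2 (boxMor d12 T.tf) (boxδ d11 d12 X.δ0)
          + rTensor (Pc ⊗[F2] Y.C1) dA1 ∘ₗ boxMor d12 T.tf) ∧
      (comp2 (boxMor d12 T.t1) (boxMor d12 X.Dh)
          + comp2 (boxMor d12 Y.Dh) (boxMor d12 T.t0)
        = comp2 (boxδ d11 d12 Y.δ1) (boxMor d12 T.th)
          + comp2 (boxMor d12 T.th) (boxδ d11 d12 X.δ0)
          + rTensor (Pc ⊗[F2] Y.C1) dA1 ∘ₗ boxMor d12 T.th) ∧
      (comp2 (dbold (boxMor d12 T.t0) (boxMor d12 T.t1) (boxMor d12 T.th))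
            (boxCone d12 X.DCR)
          + comp2 (boxCone d12 Y.DCR)
            (dbold (boxMor d12 T.t0) (boxMor d12 T.t1) (boxMor d12 T.tf))
        = comp2 (dbold (boxδ d11 d12 Y.δ0) (boxδ d11 d12 Y.δ1) (boxMor d12 Y.Dh))
            (boxCone d12 T.tcr)
          + comp2 (boxCone d12 T.tcr)
            (dbold (boxδ d11 d12 X.δ0) (boxδ d11 d12 X.δ1) (boxMor d12 X.Df))
          + rTensor ((Pc ⊗[F2] Y.C0) × (Pc ⊗[F2] Y.C1)) dA1 ∘ₗ boxCone d12 T.tcr)) ∧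
    -- and sends homotopies of typewriter morphisms to homotopies (hence
    -- homotopy equivalences to homotopy equivalences):
    (∀ (Y : TWOb A2 dA2) (S T : TWHom X Y) (H : TWHtpy S T),
      IsDHtpy dA1 (boxδ d11 d12 X.δ0) (boxδ d11 d12 Y.δ0)
        (boxMor d12 S.t0) (boxMor d12 T.t0) (boxMor d12 H.k0) ∧
      IsDHtpy dA1 (boxδ d11 d12 X.δ1) (boxδ d11 d12 Y.δ1)
        (boxMor d12 S.t1) (boxMor d12 T.t1) (boxMor d12 H.k1) ∧
      IsDHtpy dA1
        (dbold (boxδ d11 d12 X.δ0) (boxδ d11 d12 X.δ1) (boxMor d12 X.Df))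
        (dbold (boxδ d11 d12 Y.δ0) (boxδ d11 d12 Y.δ1) (boxMor d12 Y.Df))
        (dbold (boxMor d12 S.t0) (boxMor d12 S.t1) (boxMor d12 S.tf))
        (dbold (boxMor d12 T.t0) (boxMor d12 T.t1) (boxMor d12 T.tf))
        (dbold (boxMor d12 H.k0) (boxMor d12 H.k1) (boxMor d12 H.kf)) ∧
      IsDHtpy dA1
        (dbold (boxδ d11 d12 X.δ0) (boxδ d11 d12 X.δ1) (boxMor d12 X.Dh))
        (dbold (boxδ d11 d12 Y.δ0) (boxδ d11 d12 Y.δ1) (boxMor d12 Y.Dh))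
        (dbold (boxMor d12 S.t0) (boxMor d12 S.t1) (boxMor d12 S.th))
        (dbold (boxMor d12 T.t0) (boxMor d12 T.t1) (boxMor d12 T.th))
        (dbold (boxMor d12 H.k0) (boxMor d12 H.k1) (boxMor d12 H.kh)) ∧
      IsDHtpy dA1
        (dbold (dbold (boxδ d11 d12 X.δ0) (boxδ d11 d12 X.δ1) (boxMor d12 X.Df))
          (dbold (boxδ d11 d12 X.δ0) (boxδ d11 d12 X.δ1) (boxMor d12 X.Dh))
          (boxCone d12 X.DCR))
        (dbold (dbold (boxδ d11 d12 Y.δ0) (boxδ d11 d12 Y.δ1) (boxMor d12 Y.Df))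
          (dbold (boxδ d11 d12 Y.δ0) (boxδ d11 d12 Y.δ1) (boxMor d12 Y.Dh))
          (boxCone d12 Y.DCR))
        (dbold (dbold (boxMor d12 S.t0) (boxMor d12 S.t1) (boxMor d12 S.tf))
          (dbold (boxMor d12 S.t0) (boxMor d12 S.t1) (boxMor d12 S.th))
          (boxCone d12 S.tcr))
        (dbold (dbold (boxMor d12 T.t0) (boxMor d12 T.t1) (boxMor d12 T.tf))
          (dbold (boxMor d12 T.t0) (boxMor d12 T.t1) (boxMor d12 T.th))
          (boxCone d12 T.tcr))
        (dbold (dbold (boxMor d12 H.k0) (boxMor d12 H.k1) (boxMor d12 H.kf))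
          (dbold (boxMor d12 H.k0) (boxMor d12 H.k1) (boxMor d12 H.kh))
          (boxCone d12 H.kcr))) :=
  stmt16_general dA1 dA2 d11 d12 hP1 hP2 hP3 X
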